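/- arXiv:1612.04411 — 3 statements merged into one kernel-verified Lean document; each statement's English description precedes it below -/
import Mathlib

section
/- Let r ≥ 1 be an integer, let n_1, …, n_r be positive real numbers and set n = n_1 + … + n_r. For H = (H_1, …, H_r) ∈ ℝ^r, call a permutation σ of {1, …, r} H-positive if for every k with 1 ≤ k ≤ r − 1 one has ∑_{j=1}^{k} H_{σ(j)} − ((∑_{j=1}^{k} n_{σ(j)})/n) · (∑_{i=1}^{r} H_i) > 0. Then for Lebesgue-almost every H ∈ ℝ^r, the number of H-positive permutations of {1, …, r} is exactly (r − 1)!. -/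
open MeasureTheory Finset

namespace Stmt0Aux

variable {r : ℕ}

/-- The finset `{j : Fin r | j < k}`. -/
def Fk (r k : ℕ) : Finset (Fin r) := Finset.univ.filter fun j => (j : ℕ) < k

/-- Prefix sum of `f ∘ σ`. -/
noncomputable def P (f : Fin r → ℝ) (σ : Equiv.Perm (Fin r)) (k : ℕ) : ℝ :=
  ∑ j ∈ Fk r k, f (σ j)

lemma Fk_zero : Fk r 0 = ∅ := by simp [Fk]

lemma mem_Fk {k : ℕ} {j : Fin r} : j ∈ Fk r k ↔ (j : ℕ) < k := by simp [Fk]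

lemma Fk_succ {k : ℕ} (hk : k < r) :
    Fk r (k + 1) = insert ⟨k, hk⟩ (Fk r k) := by
  ext j
  simp only [mem_Fk, Finset.mem_insert, Fin.ext_iff]
  omega

lemma notMem_Fk_self {k : ℕ} (hk : k < r) : (⟨k, hk⟩ : Fin r) ∉ Fk r k := by
  simp [mem_Fk]

lemma Fk_of_le {k : ℕ} (hk : r ≤ k) : Fk r k = Finset.univ := by
  ext j; simpa [mem_Fk] using lt_of_lt_of_le j.isLt hk

lemma P_zero (f : Fin r → ℝ) (σ : Equiv.Perm (Fin r)) : P f σ 0 = 0 := by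
  simp [P, Fk_zero]

lemma P_succ (f : Fin r → ℝ) (σ : Equiv.Perm (Fin r)) {k : ℕ} (hk : k < r) :
    P f σ (k + 1) = P f σ k + f (σ ⟨k, hk⟩) := by
  rw [P, Fk_succ hk, Finset.sum_insert (notMem_Fk_self hk), P]; ring

lemma P_top (f : Fin r → ℝ) (h0 : ∑ i, f i = 0) (σ : Equiv.Perm (Fin r)) {k : ℕ}
    (hk : r ≤ k) : P f σ k = 0 := by
  rw [P, Fk_of_le hk, Equiv.sum_comp σ f, h0]

lemma card_Fk {k : ℕ} (hk : k ≤ r) : (Fk r k).card = k := by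
  induction k with
  | zero => simp [Fk_zero]
  | succ m ih =>
      rw [Fk_succ (by omega), Finset.card_insert_of_notMem (notMem_Fk_self _), ih (by omega)]

end Stmt0Aux

namespace Stmt0Aux

lemma P_ne (f : Fin r → ℝ) (h0 : ∑ i, f i = 0)
    (hgen : ∀ s : Finset (Fin r), s.Nonempty → s ≠ Finset.univ → ∑ i ∈ s, f i ≠ 0)
    (σ : Equiv.Perm (Fin r)) {a b : ℕ} (ha : a < r) (hb : b < r) (hab : a ≠ b) :
    P f σ a ≠ P f σ b := by
  -- reduce to a < b
  wlog h : a < b generalizing a b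
  · exact (this hb ha (Ne.symm hab) (by omega)).symm
  intro heq
  have hsub : Fk r a ⊆ Fk r b := fun j hj => by
    rw [mem_Fk] at *; omega
  have hdiff : P f σ b - P f σ a = ∑ j ∈ Fk r b \ Fk r a, f (σ j) := by
    rw [P, P, eq_comm]
    exact Finset.sum_sdiff_eq_sub hsub
  set s : Finset (Fin r) := (Fk r b \ Fk r a).image σ with hs
  have hmem : (⟨a, ha⟩ : Fin r) ∈ Fk r b \ Fk r a := by
    simp [Finset.mem_sdiff, mem_Fk]; omega
  have hne : s.Nonempty := ⟨σ ⟨a, ha⟩, Finset.mem_image_of_mem _ hmem⟩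
  have hcard : s.card = b - a := by
    rw [hs, Finset.card_image_of_injective _ σ.injective,
      Finset.card_sdiff_of_subset hsub, card_Fk (le_of_lt hb), card_Fk (by omega)]
  have hproper : s ≠ Finset.univ := by
    intro hcontra
    have : s.card = r := by rw [hcontra, Finset.card_univ, Fintype.card_fin]
    omega
  have hsum : ∑ i ∈ s, f i = P f σ b - P f σ a := by
    rw [hdiff, hs, Finset.sum_image (fun x _ y _ h => σ.injective h)]
  exact hgen s hne hproper (by rw [hsum, heq]; ring)

lemma mod_small {a r : ℕ} (h : a < r) : a % r = a := Nat.mod_eq_of_lt h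

lemma mod_mid {a r : ℕ} (h1 : r ≤ a) (h2 : a < 2 * r) : a % r = a - r := by
  rw [Nat.mod_eq_sub_mod h1, Nat.mod_eq_of_lt (by omega)]

lemma P_rot [NeZero r] (f : Fin r → ℝ) (h0 : ∑ i, f i = 0) (σ : Equiv.Perm (Fin r))
    (t : Fin r) : ∀ k, k ≤ r →
    P f ((Equiv.addRight t).trans σ) k = P f σ (((t : ℕ) + k) % r) - P f σ (t : ℕ) := by
  have hr : 0 < r := Nat.pos_of_ne_zero (NeZero.ne r)
  intro k
  induction k with
  | zero => intro _; simp [P_zero, mod_small t.isLt]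
  | succ k ih =>
      intro hk1
      have hk : k < r := by omega
      have ht : (t : ℕ) < r := t.isLt
      rw [P_succ _ _ hk, ih (by omega)]
      have happ : ((Equiv.addRight t).trans σ) ⟨k, hk⟩ = σ ⟨((t : ℕ) + k) % r,
          Nat.mod_lt _ hr⟩ := by
        simp only [Equiv.trans_apply, Equiv.coe_addRight]
        congr 1
        rw [Fin.ext_iff, Fin.val_add]
        simp [Nat.add_comm]
      rw [happ]
      rcases lt_trichotomy ((t : ℕ) + k + 1) r with h | h | h
      · have e1 : ((t : ℕ) + k) % r = (t : ℕ) + k := mod_small (by omega)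
        have e2 : ((t : ℕ) + (k + 1)) % r = (t : ℕ) + k + 1 := by
          rw [show (t : ℕ) + (k + 1) = (t : ℕ) + k + 1 by ring]; exact mod_small h
        have hfin : (⟨((t : ℕ) + k) % r, Nat.mod_lt _ hr⟩ : Fin r) =
            ⟨(t : ℕ) + k, by omega⟩ := by rw [Fin.ext_iff]; simp [e1]
        rw [hfin]; simp only [e1, e2]; rw [P_succ f σ (show (t : ℕ) + k < r by omega)]
        ring
      · have e1 : ((t : ℕ) + k) % r = (t : ℕ) + k := mod_small (by omega)
        have e2 : ((t : ℕ) + (k + 1)) % r = 0 := by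
          rw [show (t : ℕ) + (k + 1) = r by omega]; exact Nat.mod_self r
        have hfin : (⟨((t : ℕ) + k) % r, Nat.mod_lt _ hr⟩ : Fin r) =
            ⟨(t : ℕ) + k, by omega⟩ := by rw [Fin.ext_iff]; simp [e1]
        rw [hfin]; simp only [e1, e2]; rw [P_zero]
        have : P f σ ((t : ℕ) + k + 1) = P f σ ((t : ℕ) + k) + f (σ ⟨(t : ℕ) + k, by omega⟩) :=
          P_succ f σ (by omega)
        have htop : P f σ ((t : ℕ) + k + 1) = 0 := P_top f h0 σ (by omega)
        rw [htop] at this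
        linarith
      · have e1 : ((t : ℕ) + k) % r = (t : ℕ) + k - r := mod_mid (by omega) (by omega)
        have e2 : ((t : ℕ) + (k + 1)) % r = (t : ℕ) + k + 1 - r := by
          rw [show (t : ℕ) + (k + 1) = (t : ℕ) + k + 1 by ring]
          exact mod_mid (by omega) (by omega)
        have hfin : (⟨((t : ℕ) + k) % r, Nat.mod_lt _ hr⟩ : Fin r) =
            ⟨(t : ℕ) + k - r, by omega⟩ := by rw [Fin.ext_iff]; simp [e1]
        rw [hfin]; simp only [e1, e2]
        have e3 : (t : ℕ) + k + 1 - r = ((t : ℕ) + k - r) + 1 := by omega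
        simp only [e3]; rw [P_succ f σ (show (t : ℕ) + k - r < r by omega)]
        ring

end Stmt0Aux

namespace Stmt0Aux

/-- Positivity of the rotated permutation is equivalent to `t` being a strict argmin. -/
lemma pos_rot_iff [NeZero r] (f : Fin r → ℝ) (h0 : ∑ i, f i = 0) (σ : Equiv.Perm (Fin r))
    (t : Fin r) :
    (∀ k, 1 ≤ k → k ≤ r - 1 → 0 < P f ((Equiv.addRight t).trans σ) k) ↔
    (∀ m, m < r → m ≠ (t : ℕ) → P f σ (t : ℕ) < P f σ m) := by
  have hr : 0 < r := Nat.pos_of_ne_zero (NeZero.ne r)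
  have ht : (t : ℕ) < r := t.isLt
  constructor
  · intro hpos m hm hne
    by_cases hc : (t : ℕ) < m
    · have h1 := hpos (m - (t : ℕ)) (by omega) (by omega)
      rw [P_rot f h0 σ t _ (by omega)] at h1
      rw [show (t : ℕ) + (m - (t : ℕ)) = m by omega, mod_small hm] at h1
      linarith
    · have hc' : m < (t : ℕ) := by omega
      have h1 := hpos (m + r - (t : ℕ)) (by omega) (by omega)
      rw [P_rot f h0 σ t _ (by omega)] at h1
      rw [show (t : ℕ) + (m + r - (t : ℕ)) = m + r by omega,
        mod_mid (by omega) (by omega), show m + r - r = m by omega] at h1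
      linarith
  · intro hmin k hk1 hk2
    rw [P_rot f h0 σ t _ (by omega)]
    set m := ((t : ℕ) + k) % r with hm
    have hmr : m < r := Nat.mod_lt _ hr
    have hmne : m ≠ (t : ℕ) := by
      intro hcontra
      rcases lt_or_ge ((t : ℕ) + k) r with h | h
      · rw [hm, mod_small h] at hcontra; omega
      · rw [hm, mod_mid h (by omega)] at hcontra; omega
    have := hmin m hmr hmne
    linarith

/-- Existence and uniqueness of the strict argmin. -/
lemma exists_unique_argmin [NeZero r] (f : Fin r → ℝ) (h0 : ∑ i, f i = 0)
    (hgen : ∀ s : Finset (Fin r), s.Nonempty → s ≠ Finset.univ → ∑ i ∈ s, f i ≠ 0)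
    (σ : Equiv.Perm (Fin r)) :
    ∃! t : Fin r, ∀ m, m < r → m ≠ (t : ℕ) → P f σ (t : ℕ) < P f σ m := by
  have hr : 0 < r := Nat.pos_of_ne_zero (NeZero.ne r)
  obtain ⟨t₀, ht₀, hmin⟩ := Finset.exists_min_image (Finset.range r) (P f σ)
    ⟨0, Finset.mem_range.mpr hr⟩
  rw [Finset.mem_range] at ht₀
  refine ⟨⟨t₀, ht₀⟩, fun m hm hne => ?_, fun t' ht' => ?_⟩
  · have hle := hmin m (Finset.mem_range.mpr hm)
    have hne' := P_ne f h0 hgen σ ht₀ hm (fun h => hne h.symm)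
    exact lt_of_le_of_ne hle hne'
  · by_contra hcontra
    have h1 : (t' : ℕ) ≠ t₀ := fun h => hcontra (Fin.ext h)
    have h2 := ht' t₀ ht₀ (fun h => h1 h.symm)
    have h5 : ∀ m, m < r → m ≠ t₀ → P f σ t₀ < P f σ m := by
      intro m hm hne
      have hle := hmin m (Finset.mem_range.mpr hm)
      exact lt_of_le_of_ne hle (P_ne f h0 hgen σ ht₀ hm (fun h => hne h.symm))
    have h6 := h5 (t' : ℕ) t'.isLt h1
    linarith

end Stmt0Aux

namespace Stmt0Aux

theorem card_pos_perms (r : ℕ) (hr : 1 ≤ r) (f : Fin r → ℝ) (h0 : ∑ i, f i = 0)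
    (hgen : ∀ s : Finset (Fin r), s.Nonempty → s ≠ Finset.univ → ∑ i ∈ s, f i ≠ 0) :
    Nat.card {σ : Equiv.Perm (Fin r) // ∀ k, 1 ≤ k → k ≤ r - 1 → 0 < P f σ k}
      = (r - 1).factorial := by
  haveI : NeZero r := ⟨by omega⟩
  set Pos : Equiv.Perm (Fin r) → Prop := fun σ => ∀ k, 1 ≤ k → k ≤ r - 1 → 0 < P f σ k with hPos
  let Φ : {σ : Equiv.Perm (Fin r) // Pos σ} × Fin r → Equiv.Perm (Fin r) :=
    fun p => (Equiv.addRight p.2).trans p.1.1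
  have rot_eq : ∀ (π : Equiv.Perm (Fin r)) (u : Fin r),
      ((Equiv.addRight (-u)).trans ((Equiv.addRight u).trans π)) = π := by
    intro π u
    ext j
    simp only [Equiv.trans_apply, Equiv.coe_addRight]
    rw [neg_add_cancel_right]
  have hbij : Function.Bijective Φ := by
    constructor
    · rintro ⟨⟨τ, hτ⟩, u⟩ ⟨⟨τ', hτ'⟩, u'⟩ hE
      simp only [Φ] at hE
      have hE' : (Equiv.addRight u).trans τ = (Equiv.addRight u').trans τ' := hE
      have hτeq : τ = (Equiv.addRight (-u)).trans ((Equiv.addRight u).trans τ) :=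
        (rot_eq τ u).symm
      have hτ'eq : τ' = (Equiv.addRight (-u')).trans ((Equiv.addRight u).trans τ) := by
        rw [hE']; exact (rot_eq τ' u').symm
      obtain ⟨t, _, huniq⟩ := exists_unique_argmin f h0 hgen ((Equiv.addRight u).trans τ)
      have h1 : -u = t := huniq (-u) ((pos_rot_iff f h0 _ (-u)).mp (hτeq ▸ hτ))
      have h2 : -u' = t := huniq (-u') ((pos_rot_iff f h0 _ (-u')).mp (hτ'eq ▸ hτ'))
      have hu : u = u' := by
        have : -u = -u' := by rw [h1, h2]
        exact neg_injective this
      have hτfin : τ = τ' := by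
        rw [hτeq, hτ'eq, hu]
      exact Prod.ext (Subtype.ext hτfin) hu
    · intro π
      obtain ⟨t, hmin, _⟩ := exists_unique_argmin f h0 hgen π
      have hpos : Pos ((Equiv.addRight t).trans π) := (pos_rot_iff f h0 π t).mpr hmin
      exact ⟨⟨⟨(Equiv.addRight t).trans π, hpos⟩, -t⟩, rot_eq π t⟩
  have hcard := Nat.card_eq_of_bijective Φ hbij
  rw [Nat.card_prod] at hcard
  have h1 : Nat.card (Fin r) = r := by rw [Nat.card_eq_fintype_card, Fintype.card_fin]
  have h2 : Nat.card (Equiv.Perm (Fin r)) = r.factorial := by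
    rw [Nat.card_eq_fintype_card, Fintype.card_perm, Fintype.card_fin]
  rw [h1, h2] at hcard
  have hr' : r - 1 + 1 = r := by omega
  have hfact : r.factorial = (r - 1).factorial * r := by
    calc r.factorial = (r - 1 + 1).factorial := by rw [hr']
      _ = (r - 1 + 1) * (r - 1).factorial := Nat.factorial_succ _
      _ = (r - 1).factorial * r := by rw [hr']; ring
  rw [hfact] at hcard
  exact Nat.eq_of_mul_eq_mul_right (by omega) hcard

end Stmt0Aux

namespace Stmt0Aux

open MeasureTheory

lemma ae_generic (r : ℕ) (hr : 1 ≤ r) (n : Fin r → ℝ) (hn : ∀ i, 0 < n i) :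
    ∀ᵐ H : Fin r → ℝ ∂volume, ∀ s : Finset (Fin r), s.Nonempty → s ≠ Finset.univ →
      (∑ i ∈ s, H i) - ((∑ i ∈ s, n i) / ∑ i, n i) * (∑ i, H i) ≠ 0 := by
  haveI : NeZero r := ⟨by omega⟩
  rw [MeasureTheory.ae_all_iff]
  intro s
  by_cases hs : s.Nonempty ∧ s ≠ Finset.univ
  · obtain ⟨hne, hproper⟩ := hs
    have hNpos : 0 < ∑ i, n i := Finset.sum_pos (fun i _ => hn i) Finset.univ_nonempty
    set N : ℝ := ∑ i, n i with hN
    set c : ℝ := (∑ i ∈ s, n i) / N with hc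
    have hclt : c < 1 := by
      rw [hc, div_lt_one hNpos, hN]
      obtain ⟨i₀, hi₀⟩ : ∃ i, i ∉ s := by
        by_contra h
        push_neg at h
        exact hproper (Finset.eq_univ_iff_forall.mpr h)
      exact Finset.sum_lt_sum_of_subset (Finset.subset_univ s) (Finset.mem_univ i₀) hi₀
        (hn i₀) (fun j _ _ => le_of_lt (hn j))
    -- define the linear functional
    set L : (Fin r → ℝ) →ₗ[ℝ] ℝ :=
      { toFun := fun H => (∑ i ∈ s, H i) - c * ∑ i, H i
        map_add' := by
          intro x y
          simp only [Pi.add_apply, Finset.sum_add_distrib]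
          ring
        map_smul' := by
          intro a x
          simp only [Pi.smul_apply, smul_eq_mul, RingHom.id_apply, ← Finset.mul_sum]
          ring } with hL
    have hker : LinearMap.ker L ≠ ⊤ := by
      obtain ⟨i₀, hi₀⟩ := hne
      intro hcontra
      have hmem : Pi.single i₀ (1 : ℝ) ∈ LinearMap.ker L := by
        rw [hcontra]; trivial
      rw [LinearMap.mem_ker, hL] at hmem
      simp only [LinearMap.coe_mk, AddHom.coe_mk] at hmem
      have e1 : (∑ i ∈ s, Pi.single i₀ (1 : ℝ) i) = 1 := by
        rw [Finset.sum_eq_single i₀ (fun j _ hj => Pi.single_eq_of_ne hj 1)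
          (fun h => absurd hi₀ h), Pi.single_eq_same]
      have e2 : (∑ i, Pi.single i₀ (1 : ℝ) i) = 1 := by
        rw [Finset.sum_eq_single i₀ (fun j _ hj => Pi.single_eq_of_ne hj 1)
          (fun h => absurd (Finset.mem_univ i₀) h), Pi.single_eq_same]
      rw [e1, e2] at hmem
      have : c = 1 := by linarith
      linarith
    have hzero : volume {H : Fin r → ℝ | (∑ i ∈ s, H i) - c * ∑ i, H i = 0} = 0 := by
      have : {H : Fin r → ℝ | (∑ i ∈ s, H i) - c * ∑ i, H i = 0}
          = (LinearMap.ker L : Set (Fin r → ℝ)) := by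
        ext H
        simp [LinearMap.mem_ker, hL]
      rw [this]
      exact Measure.addHaar_submodule volume _ hker
    rw [MeasureTheory.ae_iff]
    convert hzero using 2
    ext H
    simp only [Set.mem_setOf_eq, not_forall, not_not]
    exact ⟨fun h => h.2.2, fun h => ⟨hne, hproper, h⟩⟩
  · rw [not_and_or] at hs
    filter_upwards with H h1 h2
    rcases hs with h | h
    · exact absurd h1 h
    · exact absurd h2 (by simpa using h)

end Stmt0Aux

/-- For `r ≥ 1`, positive block sizes `n 1, …, n r` with total `n = ∑ i, n i`, and for
Lebesgue-almost every `H ∈ ℝ^r`, the number of permutations `σ` of `{1, …, r}` such that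
for every `1 ≤ k ≤ r - 1` one has
`∑_{j=1}^k H (σ j) - ((∑_{j=1}^k n (σ j)) / n) * (∑ i, H i) > 0`
is exactly `(r - 1)!`. -/
theorem stmt0 (r : ℕ) (hr : 1 ≤ r) (n : Fin r → ℝ) (hn : ∀ i, 0 < n i) :
    ∀ᵐ H : Fin r → ℝ ∂volume,
      Nat.card {σ : Equiv.Perm (Fin r) //
        ∀ k : ℕ, 1 ≤ k → k ≤ r - 1 →
          0 < (∑ j ∈ Finset.univ.filter fun j : Fin r => (j : ℕ) < k, H (σ j)) -
              ((∑ j ∈ Finset.univ.filter fun j : Fin r => (j : ℕ) < k, n (σ j)) / ∑ i, n i) *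
                ∑ i, H i} = (r - 1).factorial := by
  haveI : NeZero r := ⟨by omega⟩
  filter_upwards [Stmt0Aux.ae_generic r hr n hn] with H hH
  have hNpos : 0 < ∑ i, n i := Finset.sum_pos (fun i _ => hn i) Finset.univ_nonempty
  set N : ℝ := ∑ i, n i with hN
  set f : Fin r → ℝ := fun i => H i - n i / N * ∑ j, H j with hf
  have h0 : ∑ i, f i = 0 := by
    simp only [hf]
    rw [Finset.sum_sub_distrib, ← Finset.sum_mul, ← Finset.sum_div, ← hN,
      div_self (ne_of_gt hNpos), one_mul, sub_self]
  have hgen : ∀ s : Finset (Fin r), s.Nonempty → s ≠ Finset.univ → ∑ i ∈ s, f i ≠ 0 := by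
    intro s h1 h2
    have hexpr : ∑ i ∈ s, f i = (∑ i ∈ s, H i) - ((∑ i ∈ s, n i) / N) * ∑ i, H i := by
      simp only [hf]
      rw [Finset.sum_sub_distrib, ← Finset.sum_mul, ← Finset.sum_div]
    rw [hexpr]
    exact hH s h1 h2
  have key := Stmt0Aux.card_pos_perms r hr f h0 hgen
  rw [← key]
  apply Nat.card_congr
  apply Equiv.subtypeEquivRight
  intro σ
  have hexpr : ∀ k : ℕ,
      (∑ j ∈ Finset.univ.filter fun j : Fin r => (j : ℕ) < k, H (σ j)) -
        ((∑ j ∈ Finset.univ.filter fun j : Fin r => (j : ℕ) < k, n (σ j)) / N) * ∑ i, H i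
      = Stmt0Aux.P f σ k := by
    intro k
    show _ = ∑ j ∈ Stmt0Aux.Fk r k, f (σ j)
    rw [show Stmt0Aux.Fk r k = Finset.univ.filter fun j : Fin r => (j : ℕ) < k from rfl]
    simp only [hf]
    rw [Finset.sum_sub_distrib, ← Finset.sum_mul, ← Finset.sum_div]
  constructor
  · intro h k hk1 hk2
    rw [← hexpr k]
    exact h k hk1 hk2
  · intro h k hk1 hk2
    rw [hexpr k]
    exact h k hk1 hk2
end

section
/- Let t_1, …, t_r be real numbers (r ≥ 1) with t_1 + … + t_r = 0, and assume that no nonempty proper subset J ⊊ {1, …, r} satisfies ∑_{i∈J} t_i = 0. Then the number of permutations σ of {1, …, r} such that ∑_{j=1}^{k} t_{σ(j)} > 0 for every k with 1 ≤ k ≤ r − 1 is exactly (r − 1)!. -/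
namespace Stmt1Aux

variable {r : ℕ} (t : Fin r → ℝ)

/-- Prefix sums of `t ∘ σ`. -/
def F (σ : Equiv.Perm (Fin r)) (k : ℕ) : ℝ :=
  ∑ j ∈ Finset.univ.filter fun j : Fin r => (j : ℕ) < k, t (σ j)

lemma F_zero (σ : Equiv.Perm (Fin r)) : F t σ 0 = 0 := by simp [F]

lemma F_succ (σ : Equiv.Perm (Fin r)) {k : ℕ} (hk : k < r) :
    F t σ (k + 1) = F t σ k + t (σ ⟨k, hk⟩) := by
  unfold F
  have h : (Finset.univ.filter fun j : Fin r => (j : ℕ) < k + 1)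
      = insert (⟨k, hk⟩ : Fin r) (Finset.univ.filter fun j : Fin r => (j : ℕ) < k) := by
    ext j
    simp only [Finset.mem_filter, Finset.mem_insert, Finset.mem_univ, true_and, Fin.ext_iff]
    omega
  rw [h, Finset.sum_insert (by simp)]
  ring

lemma F_top (hsum : ∑ i, t i = 0) (σ : Equiv.Perm (Fin r)) : F t σ r = 0 := by
  unfold F
  rw [Finset.filter_true_of_mem (fun j _ => j.isLt), Equiv.sum_comp σ t, hsum]

/-- Periodic extension of the prefix sums. -/
def G (σ : Equiv.Perm (Fin r)) (n : ℕ) : ℝ := F t σ (n % r)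

lemma G_succ (hr : 0 < r) (hsum : ∑ i, t i = 0) (σ : Equiv.Perm (Fin r)) (n : ℕ) :
    G t σ (n + 1) = G t σ n + t (σ ⟨n % r, Nat.mod_lt n hr⟩) := by
  have hlt : n % r < r := Nat.mod_lt n hr
  have h1 : (n + 1) % r = (n % r + 1) % r := by
    conv_lhs => rw [← Nat.mod_add_div n r]
    rw [Nat.add_right_comm]
    exact Nat.add_mul_mod_self_left (n % r + 1) r (n / r)
  unfold G
  rcases eq_or_lt_of_le (Nat.succ_le_of_lt hlt) with hcase | hcase
  · have hcase' : n % r + 1 = r := hcase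
    rw [h1, hcase', Nat.mod_self]
    rw [F_zero]
    have := F_succ t σ hlt
    rw [hcase'] at this
    rw [F_top t hsum σ] at this
    linarith [this]
  · rw [h1, Nat.mod_eq_of_lt hcase]
    exact F_succ t σ hlt

/-- Rotation of a permutation. -/
def rot [NeZero r] (σ : Equiv.Perm (Fin r)) (m : Fin r) : Equiv.Perm (Fin r) :=
  (Equiv.addRight m).trans σ

lemma rot_apply [NeZero r] (σ : Equiv.Perm (Fin r)) (m x : Fin r) :
    rot σ m x = σ (x + m) := rfl

lemma rot_rot [NeZero r] (σ : Equiv.Perm (Fin r)) (a b : Fin r) :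
    rot (rot σ a) b = rot σ (b + a) := by
  ext x
  simp only [rot_apply]
  rw [add_assoc]

lemma rot_zero [NeZero r] (σ : Equiv.Perm (Fin r)) : rot σ 0 = σ := by
  ext x
  simp [rot_apply]

lemma F_rot [NeZero r] (hsum : ∑ i, t i = 0) (σ : Equiv.Perm (Fin r)) (m : Fin r) :
    ∀ k, k ≤ r → F t (rot σ m) k = G t σ (m.val + k) - F t σ m.val := by
  have hr : 0 < r := Nat.pos_of_ne_zero (NeZero.ne r)
  intro k
  induction k with
  | zero =>
    intro _
    simp [F_zero, G, Nat.mod_eq_of_lt m.isLt]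
  | succ k ih =>
    intro hk1
    have hk : k < r := lt_of_lt_of_le (Nat.lt_succ_self k) hk1
    rw [F_succ t _ hk, ih (le_of_lt hk), ← Nat.add_assoc,
      G_succ t hr hsum σ (m.val + k)]
    have harg : (rot σ m) ⟨k, hk⟩ = σ ⟨(m.val + k) % r, Nat.mod_lt _ hr⟩ := by
      rw [rot_apply]
      congr 1
      apply Fin.ext
      rw [Fin.add_def]
      simp [Nat.add_comm]
    rw [harg]
    ring

lemma F_rot_fin [NeZero r] (hsum : ∑ i, t i = 0) (σ : Equiv.Perm (Fin r)) (m n : Fin r) :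
    F t (rot σ m) n.val = F t σ ((m + n).val) - F t σ m.val := by
  rw [F_rot t hsum σ m n.val (le_of_lt n.isLt)]
  have h : G t σ (m.val + n.val) = F t σ ((m + n).val) := by simp [G, Fin.add_def]
  rw [h]

/-- `m` is the strict minimizer of the prefix sums. -/
def IsMin (σ : Equiv.Perm (Fin r)) (m : Fin r) : Prop :=
  ∀ n : Fin r, n ≠ m → F t σ m.val < F t σ n.val

lemma F_ne_of_lt (hgen : ∀ J : Finset (Fin r), J.Nonempty → J ≠ Finset.univ → ∑ i ∈ J, t i ≠ 0)
    (σ : Equiv.Perm (Fin r)) {a b : ℕ} (hab : a < b) (hb : b < r) :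
    F t σ a ≠ F t σ b := by
  intro heq
  have hsplit : (Finset.univ.filter fun j : Fin r => (j : ℕ) < b)
      = (Finset.univ.filter fun j : Fin r => (j : ℕ) < a)
        ∪ (Finset.univ.filter fun j : Fin r => a ≤ (j : ℕ) ∧ (j : ℕ) < b) := by
    ext j
    simp only [Finset.mem_filter, Finset.mem_union, Finset.mem_univ, true_and]
    omega
  have hdisj : Disjoint (Finset.univ.filter fun j : Fin r => (j : ℕ) < a)
      (Finset.univ.filter fun j : Fin r => a ≤ (j : ℕ) ∧ (j : ℕ) < b) := by
    rw [Finset.disjoint_left]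
    intro j hj hj'
    simp only [Finset.mem_filter, Finset.mem_univ, true_and] at hj hj'
    omega
  have hS : ∑ j ∈ Finset.univ.filter fun j : Fin r => a ≤ (j : ℕ) ∧ (j : ℕ) < b, t (σ j) = 0 := by
    have : F t σ b = F t σ a
        + ∑ j ∈ Finset.univ.filter fun j : Fin r => a ≤ (j : ℕ) ∧ (j : ℕ) < b, t (σ j) := by
      unfold F
      rw [hsplit, Finset.sum_union hdisj]
    rw [← heq] at this
    linarith
  set J : Finset (Fin r) :=
    (Finset.univ.filter fun j : Fin r => a ≤ (j : ℕ) ∧ (j : ℕ) < b).image σ with hJ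
  have hsumJ : ∑ i ∈ J, t i = 0 := by
    rw [hJ, Finset.sum_image (fun x _ y _ h => σ.injective h)]
    exact hS
  have hne : J.Nonempty := by
    refine ⟨σ ⟨a, lt_trans hab hb⟩, ?_⟩
    rw [hJ]
    exact Finset.mem_image_of_mem σ (by simp [hab])
  have hnu : J ≠ Finset.univ := by
    intro hu
    have : σ ⟨b, hb⟩ ∈ J := hu ▸ Finset.mem_univ _
    rw [hJ, Finset.mem_image] at this
    obtain ⟨j, hj, hje⟩ := this
    have := σ.injective hje
    subst this
    simp only [Finset.mem_filter, Finset.mem_univ, true_and] at hj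
    omega
  exact hgen J hne hnu hsumJ

lemma F_ne (hgen : ∀ J : Finset (Fin r), J.Nonempty → J ≠ Finset.univ → ∑ i ∈ J, t i ≠ 0)
    (σ : Equiv.Perm (Fin r)) {a b : ℕ} (ha : a < r) (hb : b < r) (hab : a ≠ b) :
    F t σ a ≠ F t σ b := by
  rcases lt_or_gt_of_ne hab with h | h
  · exact F_ne_of_lt t hgen σ h hb
  · exact (F_ne_of_lt t hgen σ h ha).symm

lemma existsUnique_isMin [NeZero r]
    (hgen : ∀ J : Finset (Fin r), J.Nonempty → J ≠ Finset.univ → ∑ i ∈ J, t i ≠ 0)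
    (σ : Equiv.Perm (Fin r)) : ∃! m, IsMin t σ m := by
  obtain ⟨m, -, hm⟩ := Finset.exists_min_image Finset.univ
    (fun n : Fin r => F t σ n.val) ⟨0, Finset.mem_univ 0⟩
  refine ⟨m, fun n hn => ?_, fun y hy => ?_⟩
  · refine lt_of_le_of_ne (hm n (Finset.mem_univ n)) ?_
    exact F_ne t hgen σ m.isLt n.isLt (fun h => hn (Fin.ext h.symm))
  · by_contra h
    have h1 := hy m (fun he => h he.symm)
    have h2 : F t σ y.val ≥ F t σ m.val := hm y (Finset.mem_univ y)
    linarith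

lemma isMin_rot [NeZero r] (hsum : ∑ i, t i = 0) (σ : Equiv.Perm (Fin r)) (m n : Fin r) :
    IsMin t (rot σ m) n ↔ IsMin t σ (m + n) := by
  constructor
  · intro h q hq
    have hp : (q - m : Fin r) ≠ n := by
      intro he
      apply hq
      rw [← he]
      abel
    have := h (q - m) hp
    rw [F_rot_fin t hsum σ m n, F_rot_fin t hsum σ m (q - m)] at this
    have hqm : m + (q - m) = q := by abel
    rw [hqm] at this
    linarith
  · intro h p hp
    rw [F_rot_fin t hsum σ m n, F_rot_fin t hsum σ m p]
    have : F t σ ((m + n).val) < F t σ ((m + p).val) := by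
      apply h
      intro he
      exact hp (by exact add_left_cancel he)
    linarith

/-- The "good" predicate from the statement. -/
def GoodP (σ : Equiv.Perm (Fin r)) : Prop :=
  ∀ k : ℕ, 1 ≤ k → k ≤ r - 1 → 0 < F t σ k

lemma good_iff [NeZero r]
    (σ : Equiv.Perm (Fin r)) : GoodP t σ ↔ IsMin t σ 0 := by
  have hr : 0 < r := Nat.pos_of_ne_zero (NeZero.ne r)
  constructor
  · intro h n hn
    have hv : n.val ≠ 0 := fun he => hn (Fin.ext (by simp [he]))
    have := h n.val (Nat.one_le_iff_ne_zero.mpr hv) (by have := n.isLt; omega)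
    simpa [F_zero] using this
  · intro h k hk1 hk2
    have hkr : k < r := by omega
    have := h ⟨k, hkr⟩ (fun he => by
      have : k = 0 := by simpa [Fin.ext_iff] using he
      omega)
    simpa [F_zero] using this

end Stmt1Aux

open Stmt1Aux in
/-- If `t 1, …, t r` are real numbers (`r ≥ 1`) with `∑ i, t i = 0`, and no nonempty proper
subset of the indices has zero sum, then the number of permutations `σ` of `{1, …, r}` whose
partial sums `∑_{j=1}^k t (σ j)` are positive for all `1 ≤ k ≤ r - 1` is exactly `(r - 1)!`. -/
theorem stmt1 (r : ℕ) (hr : 1 ≤ r) (t : Fin r → ℝ) (hsum : ∑ i, t i = 0)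
    (hgen : ∀ J : Finset (Fin r), J.Nonempty → J ≠ Finset.univ → ∑ i ∈ J, t i ≠ 0) :
    Nat.card {σ : Equiv.Perm (Fin r) //
      ∀ k : ℕ, 1 ≤ k → k ≤ r - 1 →
        0 < ∑ j ∈ Finset.univ.filter fun j : Fin r => (j : ℕ) < k, t (σ j)} =
      (r - 1).factorial := by
  haveI : NeZero r := ⟨by omega⟩
  show Nat.card {σ : Equiv.Perm (Fin r) // GoodP t σ} = (r - 1).factorial
  classical
  have hmin : ∀ σ : Equiv.Perm (Fin r), ∃! m, IsMin t σ m :=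
    fun σ => existsUnique_isMin t hgen σ
  choose μ hμ hμu using hmin
  have e : Equiv.Perm (Fin r) ≃ {σ : Equiv.Perm (Fin r) // GoodP t σ} × Fin r :=
    { toFun := fun σ =>
        (⟨rot σ (μ σ), by
          rw [good_iff]
          have : IsMin t σ (μ σ + 0) := by simpa using hμ σ
          exact (isMin_rot t hsum σ (μ σ) 0).mpr this⟩, μ σ)
      invFun := fun p => rot p.1.1 (-p.2)
      left_inv := by
        intro σ
        simp only
        rw [rot_rot, neg_add_cancel, rot_zero]
      right_inv := by
        rintro ⟨⟨τ, hτ⟩, m⟩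
        have hτ' : IsMin t τ 0 := (good_iff t τ).mp hτ
        have hmin' : IsMin t (rot τ (-m)) m := by
          rw [isMin_rot t hsum τ (-m) m]
          simpa using hτ'
        have hμm : μ (rot τ (-m)) = m := (hμu (rot τ (-m)) m hmin').symm
        refine Prod.ext (Subtype.ext ?_) hμm
        show rot (rot τ (-m)) (μ (rot τ (-m))) = τ
        rw [hμm, rot_rot, add_neg_cancel, rot_zero] }
  have h1 : Nat.card (Equiv.Perm (Fin r)) = r.factorial := by
    rw [Nat.card_eq_fintype_card, Fintype.card_perm, Fintype.card_fin]
  have h2 : Nat.card (Equiv.Perm (Fin r))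
      = Nat.card {σ : Equiv.Perm (Fin r) // GoodP t σ} * r := by
    rw [Nat.card_congr e, Nat.card_prod, Nat.card_eq_fintype_card (α := Fin r), Fintype.card_fin]
  have h3 : r.factorial = (r - 1).factorial * r := by
    obtain ⟨s, rfl⟩ : ∃ s, r = s + 1 := ⟨r - 1, by omega⟩
    simp [Nat.factorial_succ, Nat.mul_comm]
  have := h2.symm.trans h1
  rw [h3] at this
  exact Nat.eq_of_mul_eq_mul_right (by omega) this
end

section
/- Let ξ denote the completed Riemann zeta function ξ(s) = π^{−s/2} Γ(s/2) ζ(s), a meromorphic function on ℂ whose only poles are simple poles at s = 0 and s = 1, with residue 1 at s = 1. Then the function H(s) = ξ(1+s)^2 · (ξ(2+3s) − ξ(2+2s)) has a simple pole at s = 0 with residue ξ′(2); that is, s · ξ(1+s)^2 · (ξ(2+3s) − ξ(2+2s)) tends to ξ′(2) as s tends to 0 through nonzero complex values. -/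
open Filter Topology

theorem tendsto_mul_completedRiemannZeta_one_add :
    Tendsto (fun s : ℂ => s * completedRiemannZeta (1 + s)) (𝓝[≠] 0) (𝓝 1) := by
  have h_shift : Tendsto (fun s : ℂ => 1 + s) (𝓝[≠] 0) (𝓝[≠] 1) := by
    refine tendsto_nhdsWithin_of_tendsto_nhds_of_eventually_within _ ?_ ?_
    · exact ((continuous_const_add (1 : ℂ)).tendsto' 0 1 (add_zero 1)).mono_left
        nhdsWithin_le_nhds
    · filter_upwards [self_mem_nhdsWithin] with s hs
      simpa using hs
  simpa [Function.comp_def] using completedRiemannZeta_residue_one.comp h_shift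

theorem HasDerivAt.tendsto_sub_comp_const_mul_div {𝕜 : Type*} [NontriviallyNormedField 𝕜]
    {f : 𝕜 → 𝕜} {f' a : 𝕜} (hf : HasDerivAt f f' a) (c d : 𝕜) :
    Tendsto (fun s => (f (a + c * s) - f (a + d * s)) / s) (𝓝[≠] 0) (𝓝 ((c - d) * f')) := by
  have h_affine (e : 𝕜) : HasDerivAt (fun s => f (a + e * s)) (f' * e) 0 := by
    have h_inner : HasDerivAt (fun s => a + e * s) e 0 := by
      simpa using ((hasDerivAt_id (0 : 𝕜)).const_mul e).const_add a
    exact (by simpa using hf : HasDerivAt f f' (a + e * 0)).comp 0 h_inner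
  have h_diff := ((h_affine c).sub (h_affine d)).tendsto_slope_zero
  convert h_diff using 2 with s
  · simp [div_eq_inv_mul]
  · ring

/-- Let `ξ = completedRiemannZeta` be the completed Riemann zeta function
`ξ(s) = π^(-s/2) Γ(s/2) ζ(s)`. Then `ξ(1+s)^2 (ξ(2+3s) - ξ(2+2s))` has a simple pole at
`s = 0` with residue `ξ'(2)`: i.e. `s * ξ(1+s)^2 * (ξ(2+3s) - ξ(2+2s)) → ξ'(2)` as `s → 0`,
`s ≠ 0`. -/
theorem stmt4 :
    Tendsto
      (fun s : ℂ =>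
        s * completedRiemannZeta (1 + s) ^ 2 *
          (completedRiemannZeta (2 + 3 * s) - completedRiemannZeta (2 + 2 * s)))
      (𝓝[≠] 0) (𝓝 (deriv completedRiemannZeta 2)) := by
  have h_pole := tendsto_mul_completedRiemannZeta_one_add
  have h_diff := (differentiableAt_completedZeta (s := 2) (by norm_num)
    (by norm_num)).hasDerivAt.tendsto_sub_comp_const_mul_div 3 2
  have h_lim := (h_pole.pow 2).mul h_diff
  norm_num at h_lim
  refine h_lim.congr' ?_
  filter_upwards [self_mem_nhdsWithin] with s (hs : s ≠ 0)
  field_simp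
end
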